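/- arXiv:2404.13637 — 3 statements merged into one kernel-verified Lean document; each statement's English description precedes it below -/
import Mathlib

section
/- Let μ ∈ ℝ, σ > 0 and α ∈ (0,1). Then sup over all probability measures in V(μ,σ) of the right-continuous Value-at-Risk VaR⁺_α equals sup over V(μ,σ) of the left-continuous Value-at-Risk VaR_α, and both equal μ + σ·√(α/(1−α)). Moreover, the supremum of VaR⁺_α is attained by the two-point distribution placing mass 1−α at μ + σ√(α/(1−α)) and mass α at μ − σ√((1−α)/α). -/
open MeasureTheory Set

/-- The cumulative distribution function of a measure on ℝ. -/
noncomputable def cdf' (ν : Measure ℝ) (x : ℝ) : ℝ := (ν (Iic x)).toReal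

/-- Left-continuous Value-at-Risk: `F⁻¹(α) = inf {x | F x ≥ α}`. -/
noncomputable def VaR (ν : Measure ℝ) (α : ℝ) : ℝ := sInf {x : ℝ | α ≤ cdf' ν x}

/-- Right-continuous Value-at-Risk: `F⁻¹⁺(α) = sup {x | F x ≤ α}`. -/
noncomputable def VaRp (ν : Measure ℝ) (α : ℝ) : ℝ := sSup {x : ℝ | cdf' ν x ≤ α}

/-- `V(m,s)`: Borel probability measures on ℝ with mean `m` and variance `s²`. -/
def Vset (m s : ℝ) : Set (Measure ℝ) :=
  {ν | IsProbabilityMeasure ν ∧ (∫ x, x ∂ν) = m ∧ (∫ x, (x - m) ^ 2 ∂ν) = s ^ 2}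

/-- Symmetry of a measure about the point `m`. -/
def SymmAbout (ν : Measure ℝ) (m : ℝ) : Prop :=
  ∀ x : ℝ, ν (Iic x) = ν (Ici (2 * m - x))

/-- Unimodality: the cdf is convex on `(-∞, m)` and concave on `(m, ∞)` for some mode `m`. -/
def Unimodal (ν : Measure ℝ) : Prop :=
  ∃ m : ℝ, ConvexOn ℝ (Iio m) (cdf' ν) ∧ ConcaveOn ℝ (Ioi m) (cdf' ν)

/-- The uniform distribution on the interval `[a, b]`. -/
noncomputable def unif (a b : ℝ) : Measure ℝ :=
  (ENNReal.ofReal (b - a))⁻¹ • volume.restrict (Icc a b)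

/-!
Cantelli's one-sided inequality `P(X - m ≥ t) ≤ s² / (s² + t²)` shows that under mean `m` and
variance `s²` the cdf exceeds `α` to the right of `m + s√(α/(1-α))` and stays below `α` to the left
of `m - s√((1-α)/α)`; this bounds both quantiles by `m + s√(α/(1-α))`. The two-point law with
these atoms is the equality case of Cantelli and its right quantile sits exactly at the bound.
Its left quantile at level `α` is the lower atom, but the two-point laws built for levels `b < α`
have left `α`-quantile equal to their upper atom, which tends to the bound as `b ↑ α`.
-/

open Filter Topology

theorem cantelli {Ω : Type*} [MeasurableSpace Ω] {μ : Measure Ω} [IsProbabilityMeasure μ]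
    {f : Ω → ℝ} (hf : MemLp f 2 μ) (hf0 : ∫ ω, f ω ∂μ = 0) {t : ℝ} (ht : 0 < t) :
    μ.real {ω | t ≤ f ω} ≤ (∫ ω, f ω ^ 2 ∂μ) / (∫ ω, f ω ^ 2 ∂μ + t ^ 2) := by
  set v := ∫ ω, f ω ^ 2 ∂μ
  have hv : 0 ≤ v := integral_nonneg fun ω => sq_nonneg _
  -- Markov's inequality for `(f + c)²` is sharpest at this shift `c`
  set c := v / t with hc_def
  have hlin : Integrable (fun ω => f ω ^ 2 + 2 * c * f ω) μ :=
    hf.integrable_sq.add ((hf.integrable one_le_two).const_mul _)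
  have hexpand : (fun ω => (f ω + c) ^ 2) = fun ω => f ω ^ 2 + 2 * c * f ω + c ^ 2 := by
    ext ω; ring
  have hshift : ∫ ω, (f ω + c) ^ 2 ∂μ = v + c ^ 2 := by
    rw [hexpand, integral_add hlin (integrable_const _),
      integral_add hf.integrable_sq ((hf.integrable one_le_two).const_mul _), integral_const_mul,
      hf0]
    simp [v]
  have hmarkov : (t + c) ^ 2 * μ.real {ω | t ≤ f ω} ≤ v + c ^ 2 := calc
    _ ≤ (t + c) ^ 2 * μ.real {ω | (t + c) ^ 2 ≤ (f ω + c) ^ 2} := by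
      refine mul_le_mul_of_nonneg_left (measureReal_mono fun ω (hω : t ≤ f ω) => ?_) (sq_nonneg _)
      show (t + c) ^ 2 ≤ (f ω + c) ^ 2
      gcongr
    _ ≤ ∫ ω, (f ω + c) ^ 2 ∂μ :=
      mul_meas_ge_le_integral_of_nonneg (ae_of_all _ fun _ => sq_nonneg _)
        (hexpand ▸ hlin.add (integrable_const _)) _
    _ = v + c ^ 2 := hshift
  rw [le_div_iff₀ (by positivity)]
  rw [hc_def] at hmarkov
  field_simp at hmarkov
  nlinarith [measureReal_nonneg (μ := μ) (s := {ω | t ≤ f ω})]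

section MeanVariance

variable {m s : ℝ} {ν : Measure ℝ}

lemma memLp_sub_of_mem_Vset (hs : 0 < s) (hν : ν ∈ Vset m s) : MemLp (fun x => x - m) 2 ν := by
  refine (memLp_two_iff_integrable_sq (by fun_prop)).2 ?_
  by_contra h
  have := hν.2.2
  rw [integral_undef h] at this
  nlinarith

lemma integral_sub_of_mem_Vset (hs : 0 < s) (hν : ν ∈ Vset m s) : ∫ x, (x - m) ∂ν = 0 := by
  have := hν.1
  have hint : Integrable (fun x : ℝ => x) ν := by
    simpa using
      integrable_add_const_iff.1 ((memLp_sub_of_mem_Vset hs hν).integrable one_le_two)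
  rw [integral_sub hint (integrable_const m), hν.2.1]
  simp

lemma measureReal_upper_tail_le (hs : 0 < s) (hν : ν ∈ Vset m s) {t : ℝ} (ht : 0 < t) :
    ν.real {x | t ≤ x - m} ≤ s ^ 2 / (s ^ 2 + t ^ 2) := by
  have := hν.1
  simpa only [hν.2.2] using
    cantelli (memLp_sub_of_mem_Vset hs hν) (integral_sub_of_mem_Vset hs hν) ht

lemma measureReal_lower_tail_le (hs : 0 < s) (hν : ν ∈ Vset m s) {t : ℝ} (ht : 0 < t) :
    ν.real {x | t ≤ m - x} ≤ s ^ 2 / (s ^ 2 + t ^ 2) := by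
  have := hν.1
  have hsq : ∫ x, (m - x) ^ 2 ∂ν = s ^ 2 := by
    simp_rw [← neg_sub _ m, neg_sq]
    exact hν.2.2
  have hmean : ∫ x, (m - x) ∂ν = 0 := by
    simp_rw [← neg_sub _ m, integral_neg, integral_sub_of_mem_Vset hs hν, neg_zero]
  have hLp : MemLp (fun x => m - x) 2 ν := by
    simpa [Pi.neg_def] using (memLp_sub_of_mem_Vset hs hν).neg
  simpa only [hsq] using cantelli hLp hmean ht

end MeanVariance

lemma sq_div_sq_add_sq_lt {a b s t : ℝ} (ha : 0 < a) (hb : 0 < b) (hs : 0 ≤ s)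
    (ht : s * √(a / b) < t) : s ^ 2 / (s ^ 2 + t ^ 2) < b / (a + b) := by
  have ht0 : 0 < t := lt_of_le_of_lt (by positivity) ht
  have hsq : s ^ 2 * a / b < t ^ 2 := calc
    s ^ 2 * a / b = (s * √(a / b)) ^ 2 := by
      rw [mul_pow, Real.sq_sqrt (by positivity), mul_div_assoc]
    _ < t ^ 2 := by gcongr
  rw [div_lt_iff₀ hb] at hsq
  rw [div_lt_div_iff₀ (by positivity) (by positivity)]
  nlinarith

lemma VaR_le_VaRp {ν : Measure ℝ} {α : ℝ} (hbelow : BddBelow {x | α ≤ cdf' ν x})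
    (habove : BddAbove {x | cdf' ν x ≤ α}) : VaR ν α ≤ VaRp ν α := by
  by_contra! h
  obtain ⟨x, hlo, hhi⟩ := exists_between h
  have hlt : cdf' ν x < α := not_le.1 fun hx => (csInf_le hbelow hx).not_gt hhi
  have hgt : α < cdf' ν x := not_le.1 fun hx => (le_csSup habove hx).not_gt hlo
  exact hlt.not_gt hgt

section Bounds

variable {m s α : ℝ} {ν : Measure ℝ}

lemma lt_cdf'_of_mem_Vset (hs : 0 < s) (hα : α ∈ Ioo 0 1) (hν : ν ∈ Vset m s) {x : ℝ}
    (hx : m + s * √(α / (1 - α)) < x) : α < cdf' ν x := by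
  have := hν.1
  have hxm : 0 < x - m := by
    have : 0 ≤ s * √(α / (1 - α)) := by positivity
    linarith
  have htail : ν.real (Ioi x) < 1 - α := calc
    ν.real (Ioi x) ≤ ν.real {y | x - m ≤ y - m} :=
      measureReal_mono fun y (hy : x < y) => show x - m ≤ y - m by linarith
    _ ≤ s ^ 2 / (s ^ 2 + (x - m) ^ 2) := measureReal_upper_tail_le hs hν hxm
    _ < (1 - α) / (α + (1 - α)) :=
      sq_div_sq_add_sq_lt hα.1 (sub_pos.2 hα.2) hs.le (by linarith)
    _ = 1 - α := by rw [add_sub_cancel, div_one]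
  rw [← compl_Iic, probReal_compl_eq_one_sub measurableSet_Iic] at htail
  exact (by linarith : α < ν.real (Iic x))

lemma cdf'_lt_of_mem_Vset (hs : 0 < s) (hα : α ∈ Ioo 0 1) (hν : ν ∈ Vset m s) {x : ℝ}
    (hx : x < m - s * √((1 - α) / α)) : cdf' ν x < α := by
  have := hν.1
  have hmx : 0 < m - x := by
    have : 0 ≤ s * √((1 - α) / α) := by positivity
    linarith
  calc cdf' ν x = ν.real (Iic x) := rfl
    _ ≤ ν.real {y | m - x ≤ m - y} :=
      measureReal_mono fun y (hy : y ≤ x) => show m - x ≤ m - y by linarith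
    _ ≤ s ^ 2 / (s ^ 2 + (m - x) ^ 2) := measureReal_lower_tail_le hs hν hmx
    _ < α / ((1 - α) + α) := sq_div_sq_add_sq_lt (sub_pos.2 hα.2) hα.1 hs.le (by linarith)
    _ = α := by rw [sub_add_cancel, div_one]

lemma VaRp_le_of_mem_Vset (hs : 0 < s) (hα : α ∈ Ioo 0 1) (hν : ν ∈ Vset m s) :
    VaRp ν α ≤ m + s * √(α / (1 - α)) := by
  refine csSup_le ⟨m - s * √((1 - α) / α) - 1, (cdf'_lt_of_mem_Vset hs hα hν ?_).le⟩
    fun x hx => le_of_not_gt fun h => (lt_cdf'_of_mem_Vset hs hα hν h).not_ge hx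
  linarith

lemma VaR_le_of_mem_Vset (hs : 0 < s) (hα : α ∈ Ioo 0 1) (hν : ν ∈ Vset m s) :
    VaR ν α ≤ m + s * √(α / (1 - α)) := by
  refine (VaR_le_VaRp ⟨m - s * √((1 - α) / α), fun x hx => ?_⟩
    ⟨m + s * √(α / (1 - α)), fun x hx => ?_⟩).trans (VaRp_le_of_mem_Vset hs hα hν)
  · exact le_of_not_gt fun h => (cdf'_lt_of_mem_Vset hs hα hν h).not_ge hx
  · exact le_of_not_gt fun h => (lt_cdf'_of_mem_Vset hs hα hν h).not_ge hx

end Bounds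

noncomputable def twoPoint (b l u : ℝ) : Measure ℝ :=
  ENNReal.ofReal (1 - b) • Measure.dirac u + ENNReal.ofReal b • Measure.dirac l

section TwoPoint

variable {b l u : ℝ}

lemma isProbabilityMeasure_twoPoint (hb : b ∈ Icc 0 1) : IsProbabilityMeasure (twoPoint b l u) := by
  constructor
  simp [twoPoint, ← ENNReal.ofReal_add (sub_nonneg.2 hb.2) hb.1]

lemma integral_twoPoint (hb : b ∈ Icc 0 1) (f : ℝ → ℝ) :
    ∫ x, f x ∂twoPoint b l u = (1 - b) * f u + b * f l := by
  rw [twoPoint, integral_add_measure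
    ((integrable_dirac enorm_lt_top).smul_measure ENNReal.ofReal_ne_top)
    ((integrable_dirac enorm_lt_top).smul_measure ENNReal.ofReal_ne_top),
    integral_smul_measure, integral_smul_measure, integral_dirac, integral_dirac,
    ENNReal.toReal_ofReal (sub_nonneg.2 hb.2), ENNReal.toReal_ofReal hb.1, smul_eq_mul,
    smul_eq_mul]

lemma cdf'_twoPoint (hb : b ∈ Icc 0 1) (x : ℝ) :
    cdf' (twoPoint b l u) x = (if u ≤ x then 1 - b else 0) + (if l ≤ x then b else 0) := by
  rw [cdf', twoPoint, Measure.add_apply, Measure.smul_apply, Measure.smul_apply,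
    Measure.dirac_apply' _ measurableSet_Iic, Measure.dirac_apply' _ measurableSet_Iic]
  simp only [smul_eq_mul, indicator_apply, mem_Iic, Pi.one_apply]
  split_ifs <;> simp [ENNReal.toReal_add, hb.1, sub_nonneg.2 hb.2]

lemma cdf'_twoPoint_le_of_lt (hb : b ∈ Icc 0 1) {x : ℝ} (hx : x < u) :
    cdf' (twoPoint b l u) x ≤ b := by
  rw [cdf'_twoPoint hb, if_neg hx.not_ge, zero_add]
  split_ifs <;> linarith [hb.1]

lemma cdf'_twoPoint_of_le (hb : b ∈ Icc 0 1) (hlu : l ≤ u) {x : ℝ} (hx : u ≤ x) :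
    cdf' (twoPoint b l u) x = 1 := by
  rw [cdf'_twoPoint hb, if_pos hx, if_pos (hlu.trans hx), sub_add_cancel]

lemma VaRp_twoPoint (hb : b ∈ Icc 0 1) (hlu : l ≤ u) {c : ℝ} (hbc : b ≤ c) (hc : c < 1) :
    VaRp (twoPoint b l u) c = u := by
  have : {x | cdf' (twoPoint b l u) x ≤ c} = Iio u := by
    ext x
    rw [mem_Iio]
    refine ⟨fun hx => not_le.1 fun hux => ?_, fun hx => (cdf'_twoPoint_le_of_lt hb hx).trans hbc⟩
    rw [mem_ofPred_eq, cdf'_twoPoint_of_le hb hlu hux] at hx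
    linarith
  rw [VaRp, this, csSup_Iio]

lemma VaR_twoPoint (hb : b ∈ Icc 0 1) (hlu : l ≤ u) {c : ℝ} (hbc : b < c) (hc : c ≤ 1) :
    VaR (twoPoint b l u) c = u := by
  have : {x | c ≤ cdf' (twoPoint b l u) x} = Ici u := by
    ext x
    rw [mem_Ici]
    refine ⟨fun hx => not_lt.1 fun hxu => ?_, fun hux => ?_⟩
    · exact (hx.trans (cdf'_twoPoint_le_of_lt hb hxu)).not_gt hbc
    · rw [mem_ofPred_eq, cdf'_twoPoint_of_le hb hlu hux]
      exact hc
  rw [VaR, this, csInf_Ici]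

end TwoPoint

lemma twoPoint_mem_Vset (m : ℝ) {s b : ℝ} (hb : b ∈ Ioo 0 1) :
    twoPoint b (m - s * √((1 - b) / b)) (m + s * √(b / (1 - b))) ∈ Vset m s := by
  obtain ⟨hb0, hb1⟩ := hb
  have hb1' : 0 < 1 - b := sub_pos.2 hb1
  have hbI : b ∈ Icc 0 1 := ⟨hb0.le, hb1.le⟩
  refine ⟨isProbabilityMeasure_twoPoint hbI, ?_, ?_⟩ <;> rw [integral_twoPoint hbI]
  · rw [Real.sqrt_div' _ hb1'.le, Real.sqrt_div' _ hb0.le]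
    field_simp
    linear_combination (1 - b) * s * Real.sq_sqrt hb0.le - b * s * Real.sq_sqrt hb1'.le
  · simp only [add_sub_cancel_left, sub_sub_cancel_left, neg_sq, mul_pow,
      Real.sq_sqrt (div_pos hb0 hb1').le, Real.sq_sqrt (div_pos hb1' hb0).le]
    field_simp
    ring

lemma sub_mul_sqrt_le_add_mul_sqrt (m : ℝ) {s : ℝ} (hs : 0 ≤ s) (a b : ℝ) :
    m - s * √a ≤ m + s * √b := by
  have : 0 ≤ s * √a := by positivity
  have : 0 ≤ s * √b := by positivity
  linarith

section WorstCase

variable {m s α : ℝ}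

lemma isGreatest_VaRp_Vset (hs : 0 < s) (hα : α ∈ Ioo 0 1) :
    IsGreatest ((fun ν => VaRp ν α) '' Vset m s) (m + s * √(α / (1 - α))) :=
  ⟨⟨_, twoPoint_mem_Vset m hα, VaRp_twoPoint (Ioo_subset_Icc_self hα)
      (sub_mul_sqrt_le_add_mul_sqrt m hs.le _ _) le_rfl hα.2⟩,
    forall_mem_image.2 fun _ hν => VaRp_le_of_mem_Vset hs hα hν⟩

lemma isLUB_VaR_Vset (hs : 0 < s) (hα : α ∈ Ioo 0 1) :
    IsLUB ((fun ν => VaR ν α) '' Vset m s) (m + s * √(α / (1 - α))) := by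
  refine ⟨forall_mem_image.2 fun _ hν => VaR_le_of_mem_Vset hs hα hν, fun y hy => ?_⟩
  have hcont : Tendsto (fun b => m + s * √(b / (1 - b))) (𝓝[<] α)
      (𝓝 (m + s * √(α / (1 - α)))) :=
    ((continuousAt_id.div (continuousAt_const.sub continuousAt_id)
      (sub_ne_zero.2 hα.2.ne')).sqrt.const_mul s |>.const_add m).tendsto.mono_left
      nhdsWithin_le_nhds
  refine le_of_tendsto hcont (Filter.mem_of_superset (Ioo_mem_nhdsLT hα.1) fun b hb => ?_)
  have hbI : b ∈ Ioo 0 1 := ⟨hb.1, hb.2.trans hα.2⟩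
  rw [mem_ofPred_eq, ← VaR_twoPoint (Ioo_subset_Icc_self hbI)
    (sub_mul_sqrt_le_add_mul_sqrt m hs.le _ _) hb.2 hα.2.le]
  exact hy (mem_image_of_mem _ (twoPoint_mem_Vset m hbI))

end WorstCase

/-- Worst-case VaR under mean–variance information (Proposition 3.1(i)). -/
theorem worst_case_VaR (m s α : ℝ) (hs : 0 < s) (hα : α ∈ Ioo (0:ℝ) 1) :
    sSup ((fun ν => VaRp ν α) '' Vset m s) = m + s * Real.sqrt (α / (1 - α)) ∧
    sSup ((fun ν => VaR ν α) '' Vset m s) = m + s * Real.sqrt (α / (1 - α)) ∧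
    ((ENNReal.ofReal (1 - α) • Measure.dirac (m + s * Real.sqrt (α / (1 - α))) +
        ENNReal.ofReal α • Measure.dirac (m - s * Real.sqrt ((1 - α) / α))) ∈ Vset m s ∧
      VaRp (ENNReal.ofReal (1 - α) • Measure.dirac (m + s * Real.sqrt (α / (1 - α))) +
        ENNReal.ofReal α • Measure.dirac (m - s * Real.sqrt ((1 - α) / α))) α
        = m + s * Real.sqrt (α / (1 - α))) := by
  have hmem := twoPoint_mem_Vset m (s := s) hα
  exact ⟨(isGreatest_VaRp_Vset hs hα).csSup_eq,
    (isLUB_VaR_Vset hs hα).csSup_eq ⟨_, mem_image_of_mem _ hmem⟩, hmem,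
    VaRp_twoPoint (Ioo_subset_Icc_self hα) (sub_mul_sqrt_le_add_mul_sqrt m hs.le _ _) le_rfl hα.2⟩
end

section
/- Let μ ∈ ℝ, σ > 0 and α ∈ (0,1). Then the infimum over all probability measures in V_US(μ,σ) of VaR_α (and likewise of VaR⁺_α) equals μ if α ∈ (1/2, 1), equals μ − σ√3·(1−2α) if α ∈ (1/6, 1/2], and equals μ − σ·√(2/(9α)) if α ∈ (0, 1/6]. For α ∈ (1/6,1/2] the infimum of VaR_α is attained by the uniform distribution on [μ − σ√3, μ + σ√3]; for α ∈ (0,1/6] it is attained by the mixture of the uniform distribution on [μ − σ√(1/(2α)), μ + σ√(1/(2α))] and a point mass at μ with weight 1−6α on the point mass. -/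
open MeasureTheory Set

/-- `V_US(m,s)`: measures in `V(m,s)` that are unimodal and symmetric about `m`. -/
def VsetUS (m s : ℝ) : Set (Measure ℝ) :=
  {ν | ν ∈ Vset m s ∧ Unimodal ν ∧ SymmAbout ν m}

/-!
If `ν` is unimodal and symmetric about `m`, its cdf `F` is convex on `(-∞, m)`: when the mode
lies to the right of `m` this is part of unimodality, otherwise it follows by reflecting the
concave part, which carries no atoms. Let `x < m` with `p = F x ≥ α`. The tangent line of `F` at
`x` has some slope `d > 0`, stays below `F` on `(-∞, m)` and reaches a height `q ≤ 1/2` at `m`.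
By the layer-cake formula and symmetry,
`s² = ∫₀^∞ 4u F(m - u) du ≥ ∫₀^{q/d} 4u (q - d u) du = 2q³/(3d²)`, and since `m - x = (q - p)/d`
this reads `2 q³ (m - x)² ≤ 3 s² (q - p)²`. Maximising `m - x` over `α ≤ p ≤ q ≤ 1/2` gives the
bounds: the maximum sits at `q = 1/2` when `α > 1/6` and at `q = 3p` when `α ≤ 1/6`, while for
`α > 1/2` symmetry alone forces `F < α` on `(-∞, m)`. Mixtures of a point mass at `m` and a
uniform law centred at `m` attain the bounds, and `VaR ≤ VaR⁺` carries the lower bounds over to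
`VaR⁺`.
-/

open Filter Topology
open scoped ENNReal

lemma ConvexOn.add_rightDeriv_mul_sub_le {S : Set ℝ} {f : ℝ → ℝ} (hf : ConvexOn ℝ S f) {x y : ℝ}
    (hx : x ∈ interior S) (hy : y ∈ S) : f x + derivWithin f (Ioi x) x * (y - x) ≤ f y := by
  rcases lt_trichotomy y x with hyx | rfl | hxy
  · have h := (hf.slope_le_leftDeriv_of_mem_interior hy hx hyx).trans
      (hf.leftDeriv_le_rightDeriv_of_mem_interior hx)
    rw [slope_def_field, div_le_iff₀ (sub_pos.2 hyx)] at h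
    linarith
  · simp
  · have h := hf.rightDeriv_le_slope_of_mem_interior hx hy hxy
    rw [slope_def_field, le_div_iff₀ (sub_pos.2 hxy)] at h
    linarith

section Cdf

variable {ν : Measure ℝ} {x : ℝ}

lemma cdf'_eq_cdf [IsProbabilityMeasure ν] : cdf' ν = ProbabilityTheory.cdf ν := by
  ext x
  rw [ProbabilityTheory.cdf_eq_real, measureReal_def, cdf']

lemma monotone_cdf' (ν : Measure ℝ) [IsProbabilityMeasure ν] : Monotone (cdf' ν) :=
  cdf'_eq_cdf (ν := ν) ▸ ProbabilityTheory.monotone_cdf ν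

lemma tendsto_cdf'_atBot (ν : Measure ℝ) [IsProbabilityMeasure ν] :
    Tendsto (cdf' ν) atBot (𝓝 0) :=
  cdf'_eq_cdf (ν := ν) ▸ ProbabilityTheory.tendsto_cdf_atBot ν

lemma tendsto_cdf'_atTop (ν : Measure ℝ) [IsProbabilityMeasure ν] :
    Tendsto (cdf' ν) atTop (𝓝 1) :=
  cdf'_eq_cdf (ν := ν) ▸ ProbabilityTheory.tendsto_cdf_atTop ν

lemma measure_singleton_eq_zero_of_continuousAt_cdf' [IsFiniteMeasure ν] {y : ℝ}
    (hy : ContinuousAt (cdf' ν) y) : ν {y} = 0 := by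
  have hle : ∀ z < y, (ν {y}).toReal ≤ cdf' ν y - cdf' ν z := fun z hz => by
    simp only [cdf', ← measureReal_def]
    rw [← measureReal_sdiff (Iic_subset_Iic.2 hz.le) measurableSet_Iic]
    exact measureReal_mono (by simpa using hz)
  have hlim : Tendsto (fun z => cdf' ν y - cdf' ν z) (𝓝[<] y) (𝓝 0) := by
    simpa using ((tendsto_const_nhds (x := cdf' ν y)).sub hy.tendsto).mono_left nhdsWithin_le_nhds
  have : (ν {y}).toReal ≤ 0 :=
    ge_of_tendsto hlim (eventually_nhdsWithin_of_forall fun z hz => hle z hz)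
  exact (ENNReal.toReal_eq_zero_iff _).1 (le_antisymm this ENNReal.toReal_nonneg)
    |>.resolve_right (measure_ne_top _ _)

lemma cdf'_add (μ ν : Measure ℝ) [IsFiniteMeasure μ] [IsFiniteMeasure ν] :
    cdf' (μ + ν) x = cdf' μ x + cdf' ν x := by
  simp only [cdf', Measure.add_apply]
  exact ENNReal.toReal_add (measure_ne_top _ _) (measure_ne_top _ _)

lemma cdf'_smul (c : ℝ≥0∞) (μ : Measure ℝ) : cdf' (c • μ) x = c.toReal * cdf' μ x := by
  simp only [cdf', Measure.smul_apply, smul_eq_mul, ENNReal.toReal_mul]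

lemma cdf'_dirac (a : ℝ) : cdf' (Measure.dirac a) x = if a ≤ x then 1 else 0 := by
  split_ifs with h <;> simp [cdf', h]

end Cdf

section VaR

variable {ν : Measure ℝ} {α B : ℝ}

lemma bddBelow_le_cdf' [IsProbabilityMeasure ν] (hα : 0 < α) :
    BddBelow {x | α ≤ cdf' ν x} := by
  obtain ⟨z, hz⟩ := ((tendsto_cdf'_atBot ν).eventually_lt_const hα).exists
  exact ⟨z, fun x hx => ((monotone_cdf' ν).reflect_lt (hz.trans_le hx)).le⟩

lemma bddAbove_cdf'_le [IsProbabilityMeasure ν] (hα : α < 1) :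
    BddAbove {x | cdf' ν x ≤ α} := by
  obtain ⟨z, hz⟩ := ((tendsto_cdf'_atTop ν).eventually_const_lt hα).exists
  exact ⟨z, fun x hx => ((monotone_cdf' ν).reflect_lt (hx.trans_lt hz)).le⟩

lemma le_VaR [IsProbabilityMeasure ν] (hα : α < 1)
    (hB : B ∈ lowerBounds {x | α ≤ cdf' ν x}) : B ≤ VaR ν α := by
  obtain ⟨z, hz⟩ := ((tendsto_cdf'_atTop ν).eventually_const_lt hα).exists
  exact le_csInf ⟨z, hz.le⟩ hB

lemma VaR_le_VaRp_s7 [IsProbabilityMeasure ν] (hα₀ : 0 < α) (hα₁ : α < 1) :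
    VaR ν α ≤ VaRp ν α :=
  le_of_forall_lt_imp_le_of_dense fun x hx => by
    have hx' : x ∉ {x | α ≤ cdf' ν x} := notMem_of_lt_csInf hx (bddBelow_le_cdf' hα₀)
    exact le_csSup (bddAbove_cdf'_le hα₁) (show cdf' ν x ≤ α from (not_le.1 hx').le)

lemma VaRp_eq (hlt : ∀ x < B, cdf' ν x < α) (hgt : ∀ x, B < x → α < cdf' ν x) :
    VaRp ν α = B := by
  refine IsLUB.csSup_eq ⟨fun x hx => not_lt.1 fun h => (hgt x h).not_ge hx, fun b hb => ?_⟩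
    ⟨B - 1, (hlt _ (by linarith)).le⟩
  exact le_of_forall_lt_imp_le_of_dense fun x hx => hb (hlt x hx).le

lemma sInf_VaR_eq_and_sInf_VaRp_eq {S : Set (Measure ℝ)}
    (hS : ∀ ν ∈ S, IsProbabilityMeasure ν) (hα₀ : 0 < α) (hα₁ : α < 1)
    (hB : ∀ ν ∈ S, B ∈ lowerBounds {x | α ≤ cdf' ν x}) {ν₀ : Measure ℝ} (hν₀ : ν₀ ∈ S)
    (h₀ : α ≤ cdf' ν₀ B) (h₀' : ∀ x, B < x → α < cdf' ν₀ x) :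
    sInf ((fun ν => VaR ν α) '' S) = B ∧ sInf ((fun ν => VaRp ν α) '' S) = B ∧
      VaR ν₀ α = B := by
  have hVaR : VaR ν₀ α = B := IsLeast.csInf_eq ⟨h₀, hB ν₀ hν₀⟩
  have hVaRp : VaRp ν₀ α = B :=
    VaRp_eq (fun x hx => not_le.1 fun h => (hB ν₀ hν₀ h).not_gt hx) h₀'
  have hle : ∀ ν ∈ S, B ≤ VaR ν α := fun ν hν => have := hS ν hν; le_VaR hα₁ (hB ν hν)
  refine ⟨IsLeast.csInf_eq ⟨⟨ν₀, hν₀, hVaR⟩, ?_⟩, IsLeast.csInf_eq ⟨⟨ν₀, hν₀, hVaRp⟩, ?_⟩,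
    hVaR⟩
  · rintro _ ⟨ν, hν, rfl⟩
    exact hle ν hν
  · rintro _ ⟨ν, hν, rfl⟩
    have := hS ν hν
    exact (hle ν hν).trans (VaR_le_VaRp_s7 hα₀ hα₁)

end VaR

section Symmetry

variable {μ ν : Measure ℝ} {m : ℝ}

lemma SymmAbout.add (hμ : SymmAbout μ m) (hν : SymmAbout ν m) : SymmAbout (μ + ν) m :=
  fun x => by simp only [Measure.add_apply, hμ x, hν x]

lemma SymmAbout.smul (hμ : SymmAbout μ m) (c : ℝ≥0∞) : SymmAbout (c • μ) m :=
  fun x => by simp only [Measure.smul_apply, hμ x]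

lemma symmAbout_dirac (m : ℝ) : SymmAbout (Measure.dirac m) m := fun x => by
  by_cases h : m ≤ x
  · simp [h, show 2 * m - x ≤ m by linarith]
  · simp [h, show ¬ 2 * m - x ≤ m by linarith]

end Symmetry

section Uniform

variable {a b x : ℝ}

lemma unif_apply (s : Set ℝ) (hs : MeasurableSet s) :
    unif a b s = volume (s ∩ Icc a b) / ENNReal.ofReal (b - a) := by
  rw [unif, Measure.smul_apply, Measure.restrict_apply hs, smul_eq_mul, ENNReal.div_eq_inv_mul]

lemma isProbabilityMeasure_unif (hab : a < b) : IsProbabilityMeasure (unif a b) := by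
  constructor
  rw [unif_apply _ MeasurableSet.univ, univ_inter, Real.volume_Icc,
    ENNReal.div_self (by simpa using hab) ENNReal.ofReal_ne_top]

lemma cdf'_unif (hab : a < b) (x : ℝ) :
    cdf' (unif a b) x = max 0 (min ((x - a) / (b - a)) 1) := by
  have hba : 0 < b - a := sub_pos.2 hab
  have hset : Iic x ∩ Icc a b = Icc a (min x b) := by
    ext y
    simp only [mem_inter_iff, mem_Iic, mem_Icc, le_min_iff]
    tauto
  rw [cdf', unif_apply _ measurableSet_Iic, ENNReal.toReal_div, hset, Real.volume_Icc,
    ENNReal.toReal_ofReal hba.le, ENNReal.toReal_ofReal', max_comm]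
  rcases le_total x b with hxb | hbx
  · rw [min_eq_left hxb, min_eq_left ((div_le_one hba).2 (by linarith)),
      ← max_div_div_right hba.le, zero_div]
  · rw [min_eq_right hbx, min_eq_right ((one_le_div hba).2 (by linarith)), max_eq_right hba.le,
      div_self hba.ne', max_eq_right zero_le_one]

lemma integral_unif (hab : a < b) (f : ℝ → ℝ) :
    ∫ x, f x ∂(unif a b) = (b - a)⁻¹ * ∫ x in a..b, f x := by
  rw [unif, integral_smul_measure, ENNReal.toReal_inv, ENNReal.toReal_ofReal (sub_pos.2 hab).le,
    smul_eq_mul, integral_Icc_eq_integral_Ioc, intervalIntegral.integral_of_le hab.le]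

lemma symmAbout_unif (m c : ℝ) : SymmAbout (unif (m - c) (m + c)) m := by
  intro x
  have hIic : Iic x ∩ Icc (m - c) (m + c) = Icc (m - c) (min x (m + c)) := by
    ext y
    simp only [mem_inter_iff, mem_Iic, mem_Icc, le_min_iff]
    tauto
  have hIci : Ici (2 * m - x) ∩ Icc (m - c) (m + c) = Icc (max (2 * m - x) (m - c)) (m + c) := by
    ext y
    simp only [mem_inter_iff, mem_Ici, mem_Icc, max_le_iff]
    tauto
  have hlen : min x (m + c) - (m - c) = m + c - max (2 * m - x) (m - c) := by
    rcases le_total x (m + c) with h | h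
    · rw [min_eq_left h, max_eq_left (by linarith)]
      ring
    · rw [min_eq_right h, max_eq_right (by linarith)]
  rw [unif_apply _ measurableSet_Iic, unif_apply _ measurableSet_Ici, hIic, hIci,
    Real.volume_Icc, Real.volume_Icc, hlen]

end Uniform

section Mixture

noncomputable def diracUnifMix (m c w : ℝ) : Measure ℝ :=
  ENNReal.ofReal (1 - w) • Measure.dirac m + ENNReal.ofReal w • unif (m - c) (m + c)

variable {m c w s α x : ℝ}

lemma diracUnifMix_one (m c : ℝ) : diracUnifMix m c 1 = unif (m - c) (m + c) := by
  simp [diracUnifMix]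

lemma isProbabilityMeasure_diracUnifMix (hc : 0 < c) (hw₀ : 0 ≤ w) (hw₁ : w ≤ 1) :
    IsProbabilityMeasure (diracUnifMix m c w) := by
  have := isProbabilityMeasure_unif (show m - c < m + c by linarith)
  constructor
  simp [diracUnifMix, ← ENNReal.ofReal_add (sub_nonneg.2 hw₁) hw₀]

lemma cdf'_diracUnifMix (hc : 0 < c) (hw₀ : 0 ≤ w) (hw₁ : w ≤ 1) (x : ℝ) :
    cdf' (diracUnifMix m c w) x
      = (1 - w) * (if m ≤ x then 1 else 0) + w * max 0 (min ((x - (m - c)) / (2 * c)) 1) := by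
  have := isProbabilityMeasure_unif (show m - c < m + c by linarith)
  have := (Measure.dirac m).smul_finite (ENNReal.ofReal_ne_top (r := 1 - w))
  have := (unif (m - c) (m + c)).smul_finite (ENNReal.ofReal_ne_top (r := w))
  rw [diracUnifMix, cdf'_add, cdf'_smul, cdf'_smul, cdf'_dirac, cdf'_unif (by linarith),
    ENNReal.toReal_ofReal (sub_nonneg.2 hw₁), ENNReal.toReal_ofReal hw₀,
    show m + c - (m - c) = 2 * c by ring]

lemma integral_diracUnifMix (hc : 0 < c) (hw₀ : 0 ≤ w) (hw₁ : w ≤ 1) {f : ℝ → ℝ}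
    (hf : Continuous f) :
    ∫ x, f x ∂(diracUnifMix m c w)
      = (1 - w) * f m + w * ((2 * c)⁻¹ * ∫ x in (m - c)..(m + c), f x) := by
  have hlt : m - c < m + c := by linarith
  have hunif : Integrable f (unif (m - c) (m + c)) :=
    hf.integrableOn_Icc.smul_measure (ENNReal.inv_ne_top.2 (by simpa using hc))
  rw [diracUnifMix, integral_add_measure
      ((integrable_dirac enorm_lt_top).smul_measure ENNReal.ofReal_ne_top)
      (hunif.smul_measure ENNReal.ofReal_ne_top),
    integral_smul_measure, integral_smul_measure, integral_dirac, integral_unif hlt,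
    ENNReal.toReal_ofReal (sub_nonneg.2 hw₁), ENNReal.toReal_ofReal hw₀,
    show m + c - (m - c) = 2 * c by ring, smul_eq_mul, smul_eq_mul]

lemma integral_id_diracUnifMix (hc : 0 < c) (hw₀ : 0 ≤ w) (hw₁ : w ≤ 1) :
    ∫ x, x ∂(diracUnifMix m c w) = m := by
  rw [integral_diracUnifMix (f := fun x => x) hc hw₀ hw₁ continuous_id, integral_id]
  field_simp
  ring

lemma integral_sq_sub_diracUnifMix (hc : 0 < c) (hw₀ : 0 ≤ w) (hw₁ : w ≤ 1) :
    ∫ x, (x - m) ^ 2 ∂(diracUnifMix m c w) = w * c ^ 2 / 3 := by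
  rw [integral_diracUnifMix hc hw₀ hw₁ (by fun_prop),
    intervalIntegral.integral_comp_sub_right (fun x => x ^ 2) m, integral_pow]
  field_simp
  ring

lemma symmAbout_diracUnifMix (m c w : ℝ) : SymmAbout (diracUnifMix m c w) m :=
  ((symmAbout_dirac m).smul _).add ((symmAbout_unif m c).smul _)

lemma unimodal_diracUnifMix (hc : 0 < c) (hw₀ : 0 ≤ w) (hw₁ : w ≤ 1) :
    Unimodal (diracUnifMix m c w) := by
  set r : ℝ → ℝ := fun x => (x - (m - c)) / (2 * c)
  have hr : r = fun x => (2 * c)⁻¹ • (x + -(m - c)) := by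
    ext x
    simp only [r, smul_eq_mul]
    ring
  have hr₀ : (0 : ℝ) ≤ (2 * c)⁻¹ := by positivity
  have hr_cvx : ConvexOn ℝ univ r :=
    hr ▸ ((convexOn_id convex_univ).add_const _).smul hr₀
  have hr_ccv : ConcaveOn ℝ univ r :=
    hr ▸ ((concaveOn_id convex_univ).add_const _).smul hr₀
  refine ⟨m, ?_, ?_⟩
  · refine ((((convexOn_const 0 convex_univ).sup hr_cvx).smul hw₀).subset (subset_univ _)
      (convex_Iio m)).congr fun x (hx : x < m) => ?_
    have hrx : r x ≤ 1 := (div_le_one (by positivity)).2 (by linarith)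
    simp only [cdf'_diracUnifMix hc hw₀ hw₁, if_neg (not_le.2 hx), min_eq_left hrx, smul_eq_mul,
      Pi.sup_apply, r]
    ring
  · refine ((((hr_ccv.inf (concaveOn_const 1 convex_univ)).smul hw₀).add_const (1 - w)).subset
      (subset_univ _) (convex_Ioi m)).congr fun x (hx : m < x) => ?_
    have hrx : 0 ≤ min (r x) 1 := le_min (div_nonneg (by linarith) (by positivity)) zero_le_one
    simp only [cdf'_diracUnifMix hc hw₀ hw₁, if_pos hx.le, max_eq_right hrx, smul_eq_mul,
      Pi.add_apply, Pi.inf_apply, r]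
    ring

lemma diracUnifMix_mem_VsetUS (hc : 0 < c) (hw₀ : 0 ≤ w) (hw₁ : w ≤ 1)
    (hvar : w * c ^ 2 / 3 = s ^ 2) : diracUnifMix m c w ∈ VsetUS m s :=
  ⟨⟨isProbabilityMeasure_diracUnifMix hc hw₀ hw₁, integral_id_diracUnifMix hc hw₀ hw₁,
      (integral_sq_sub_diracUnifMix hc hw₀ hw₁).trans hvar⟩,
    unimodal_diracUnifMix hc hw₀ hw₁, symmAbout_diracUnifMix m c w⟩

lemma mul_clamp_le_cdf'_diracUnifMix (hc : 0 < c) (hw₀ : 0 ≤ w) (hw₁ : w ≤ 1) (x : ℝ) :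
    w * max 0 (min ((x - (m - c)) / (2 * c)) 1) ≤ cdf' (diracUnifMix m c w) x := by
  rw [cdf'_diracUnifMix hc hw₀ hw₁]
  have : 0 ≤ (1 - w) * (if m ≤ x then 1 else 0 : ℝ) := by
    split_ifs <;> linarith
  linarith

lemma le_cdf'_diracUnifMix_and_forall_lt (hc : 0 < c) (hw₀ : 0 < w) (hw₁ : w ≤ 1) (hαw : α < w)
    {x₀ : ℝ} (hx₀ : w * (x₀ - (m - c)) = 2 * c * α) :
    α ≤ cdf' (diracUnifMix m c w) x₀ ∧ ∀ x, x₀ < x → α < cdf' (diracUnifMix m c w) x := by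
  have hr : ∀ x, w * ((x - (m - c)) / (2 * c)) = α + w * (x - x₀) / (2 * c) := fun x => by
    field_simp
    linear_combination hx₀
  refine ⟨le_trans ?_ (mul_clamp_le_cdf'_diracUnifMix hc hw₀.le hw₁ x₀), fun x hx => ?_⟩
  · rw [mul_max_of_nonneg _ _ hw₀.le, mul_min_of_nonneg _ _ hw₀.le, hr, sub_self, mul_zero,
      zero_div, add_zero, mul_one]
    exact le_max_of_le_right (le_min le_rfl hαw.le)
  · refine lt_of_lt_of_le ?_ (mul_clamp_le_cdf'_diracUnifMix hc hw₀.le hw₁ x)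
    rw [mul_max_of_nonneg _ _ hw₀.le, mul_min_of_nonneg _ _ hw₀.le, hr, mul_one]
    have : 0 < w * (x - x₀) / (2 * c) := by
      have := sub_pos.2 hx
      positivity
    exact lt_max_of_lt_right (lt_min (by linarith) hαw)

lemma cdf'_diracUnifMix_self (hc : 0 < c) (hw₀ : 0 ≤ w) (hw₁ : w ≤ 1) :
    cdf' (diracUnifMix m c w) m = 1 - w / 2 := by
  rw [cdf'_diracUnifMix hc hw₀ hw₁, if_pos le_rfl,
    show (m - (m - c)) / (2 * c) = 1 / 2 by field_simp; ring]
  norm_num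
  ring

lemma lt_cdf'_diracUnifMix_of_lt (hc : 0 < c) (hw₀ : 0 < w) (hw₁ : w ≤ 1) (hx : m < x) :
    1 - w / 2 < cdf' (diracUnifMix m c w) x := by
  rw [cdf'_diracUnifMix hc hw₀.le hw₁, if_pos hx.le]
  have : 1 / 2 < min ((x - (m - c)) / (2 * c)) 1 :=
    lt_min ((lt_div_iff₀ (by positivity)).2 (by linarith)) (by norm_num)
  nlinarith [le_max_right 0 (min ((x - (m - c)) / (2 * c)) 1)]

end Mixture

section Variance

variable {ν : Measure ℝ} {m : ℝ}

lemma ofReal_integral_sq_sub_eq_lintegral (hint : Integrable (fun x => (x - m) ^ 2) ν) :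
    ENNReal.ofReal (∫ x, (x - m) ^ 2 ∂ν)
      = ∫⁻ u in Ioi 0, ν {x | u ≤ |x - m|} * ENNReal.ofReal (2 * u) := by
  have hlayer := lintegral_comp_eq_lintegral_meas_le_mul ν (f := fun x => |x - m|)
    (g := fun t => 2 * t) (Eventually.of_forall fun x => abs_nonneg _) (by fun_prop)
    (fun t _ => (continuous_const.mul continuous_id).intervalIntegrable 0 t)
    (ae_restrict_of_forall_mem measurableSet_Ioi fun t (ht : 0 < t) => by positivity)
  have hG : ∀ x, ∫ t in (0 : ℝ)..|x - m|, 2 * t = (x - m) ^ 2 := fun x => by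
    rw [intervalIntegral.integral_const_mul, integral_id, sq_abs]
    ring
  simp only [hG] at hlayer
  rw [ofReal_integral_eq_lintegral_ofReal hint (Eventually.of_forall fun x => sq_nonneg _),
    hlayer]

lemma integral_mul_sub_mul_Ioc {q d : ℝ} (hq : 0 ≤ q) (hd : 0 < d) :
    ∫ u in Ioc 0 (q / d), 4 * u * (q - d * u) = 2 * q ^ 3 / (3 * d ^ 2) := by
  rw [← intervalIntegral.integral_of_le (by positivity)]
  have hpoly : ∀ u : ℝ, 4 * u * (q - d * u) = 4 * q * u - 4 * d * u ^ 2 := fun u => by ring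
  simp only [hpoly]
  rw [intervalIntegral.integral_sub (Continuous.intervalIntegrable (by fun_prop) _ _)
      (Continuous.intervalIntegrable (by fun_prop) _ _),
    intervalIntegral.integral_const_mul, intervalIntegral.integral_const_mul, integral_id,
    integral_pow]
  norm_num
  field_simp
  ring

lemma integral_sq_sub_ge_of_symmAbout [IsFiniteMeasure ν] (hsym : SymmAbout ν m)
    (hint : Integrable (fun x => (x - m) ^ 2) ν) {q d : ℝ} (hq : 0 ≤ q) (hd : 0 < d)
    (hF : ∀ u > 0, q - d * u ≤ cdf' ν (m - u)) :
    2 * q ^ 3 / (3 * d ^ 2) ≤ ∫ x, (x - m) ^ 2 ∂ν := by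
  have htail : ∀ u > 0, ν {x | u ≤ |x - m|} = 2 * ν (Iic (m - u)) := by
    intro u hu
    have hset : {x | u ≤ |x - m|} = Iic (m - u) ∪ Ici (m + u) := by
      ext x
      simp only [mem_ofPred_eq, mem_union, mem_Iic, mem_Ici, le_abs]
      constructor <;> rintro (h | h) <;> [right; left; right; left] <;> linarith
    rw [hset, measure_union (Iic_disjoint_Ici.2 (by linarith)) measurableSet_Ici, hsym (m - u),
      show 2 * m - (m - u) = m + u by ring, two_mul]
  have hpoint : ∀ u ∈ Ioi (0 : ℝ), ENNReal.ofReal (4 * u * (q - d * u))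
      ≤ ν {x | u ≤ |x - m|} * ENNReal.ofReal (2 * u) := by
    intro u (hu : 0 < u)
    have hlin : ENNReal.ofReal (q - d * u) ≤ ν (Iic (m - u)) :=
      (ENNReal.ofReal_le_ofReal (hF u hu)).trans_eq (ENNReal.ofReal_toReal (measure_ne_top _ _))
    rw [htail u hu, show 4 * u * (q - d * u) = 2 * (q - d * u) * (2 * u) by ring,
      ENNReal.ofReal_mul' (by positivity), ENNReal.ofReal_mul zero_le_two, ENNReal.ofReal_ofNat]
    gcongr
  have hnonneg : ∀ u ∈ Ioc 0 (q / d), 0 ≤ 4 * u * (q - d * u) := fun u hu => by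
    have : d * u ≤ q := by rw [← le_div_iff₀' hd]; exact hu.2
    nlinarith [hu.1]
  have hbound : ENNReal.ofReal (2 * q ^ 3 / (3 * d ^ 2))
      ≤ ENNReal.ofReal (∫ x, (x - m) ^ 2 ∂ν) := by
    calc ENNReal.ofReal (2 * q ^ 3 / (3 * d ^ 2))
        = ∫⁻ u in Ioc 0 (q / d), ENNReal.ofReal (4 * u * (q - d * u)) := by
          rw [← integral_mul_sub_mul_Ioc hq hd, ofReal_integral_eq_lintegral_ofReal
            (Continuous.integrableOn_Ioc (by fun_prop))
            (ae_restrict_of_forall_mem measurableSet_Ioc hnonneg)]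
      _ ≤ ∫⁻ u in Ioi 0, ENNReal.ofReal (4 * u * (q - d * u)) :=
          lintegral_mono_set Ioc_subset_Ioi_self
      _ ≤ ∫⁻ u in Ioi 0, ν {x | u ≤ |x - m|} * ENNReal.ofReal (2 * u) :=
          setLIntegral_mono' measurableSet_Ioi hpoint
      _ = ENNReal.ofReal (∫ x, (x - m) ^ 2 ∂ν) :=
          (ofReal_integral_sq_sub_eq_lintegral hint).symm
  exact (ENNReal.ofReal_le_ofReal_iff (integral_nonneg fun x => sq_nonneg _)).1 hbound

end Variance

section SymmetricUnimodal

variable {ν : Measure ℝ} {m : ℝ}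

lemma cdf'_le_half_of_symmAbout [IsProbabilityMeasure ν] (hsym : SymmAbout ν m) {x : ℝ}
    (hx : x < m) : cdf' ν x ≤ 1 / 2 := by
  have hsum : ν.real (Iic x) + ν.real (Ici (2 * m - x)) ≤ 1 := by
    rw [← measureReal_union (Iic_disjoint_Ici.2 (by linarith)) measurableSet_Ici]
    exact measureReal_le_one
  rw [measureReal_def, measureReal_def, ← hsym x] at hsum
  rw [cdf']
  linarith

lemma convexOn_cdf'_Iio [IsProbabilityMeasure ν] (hU : Unimodal ν) (hsym : SymmAbout ν m) :
    ConvexOn ℝ (Iio m) (cdf' ν) := by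
  obtain ⟨m', hcx, hcc⟩ := hU
  rcases le_or_gt m m' with hm | hm
  · exact hcx.subset (Iio_subset_Iio hm) (convex_Iio m)
  have hrefl : ∀ x < m, cdf' ν x = 1 - cdf' ν (2 * m - x) := by
    intro x hx
    have hcont : ContinuousAt (cdf' ν) (2 * m - x) :=
      (hcc.continuousOn isOpen_Ioi).continuousAt (Ioi_mem_nhds (by linarith))
    have hatom := measure_singleton_eq_zero_of_continuousAt_cdf' hcont
    rw [cdf', hsym x, ← compl_Iio, measure_compl measurableSet_Iio (measure_ne_top _ _),
      measure_univ, measure_congr (Iio_ae_eq_Iic' hatom),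
      ENNReal.toReal_sub_of_le prob_le_one ENNReal.one_ne_top, ENNReal.toReal_one, cdf']
  let r : ℝ →ᵃ[ℝ] ℝ := AffineMap.const ℝ ℝ (2 * m) - AffineMap.id ℝ ℝ
  have hr : ConcaveOn ℝ (Iio m) (cdf' ν ∘ r) :=
    (hcc.comp_affineMap r).subset (fun x (hx : x < m) => by simp [r]; linarith) (convex_Iio m)
  exact ((convexOn_const 1 (convex_Iio m)).sub hr).congr fun x hx => (hrefl x hx).symm

lemma exists_cube_mul_sq_le [IsProbabilityMeasure ν] (hU : Unimodal ν) (hsym : SymmAbout ν m)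
    (hint : Integrable (fun y => (y - m) ^ 2) ν) {x : ℝ} (hx : x < m) (hFx : 0 < cdf' ν x) :
    ∃ q, cdf' ν x ≤ q ∧ q ≤ 1 / 2 ∧
      2 * q ^ 3 * (m - x) ^ 2 ≤ 3 * (∫ y, (y - m) ^ 2 ∂ν) * (q - cdf' ν x) ^ 2 := by
  set d := derivWithin (cdf' ν) (Ioi x) x
  have htangent : ∀ y < m, cdf' ν x + d * (y - x) ≤ cdf' ν y := fun y hy =>
    (convexOn_cdf'_Iio hU hsym).add_rightDeriv_mul_sub_le (by rwa [interior_Iio]) hy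
  have hd : 0 < d := by
    obtain ⟨y, hFy, hyx⟩ := (((tendsto_cdf'_atBot ν).eventually_lt_const hFx).and
      (eventually_lt_atBot x)).exists
    nlinarith [htangent y (hyx.trans hx)]
  set q := cdf' ν x + d * (m - x)
  have hq : cdf' ν x ≤ q := by nlinarith
  refine ⟨q, hq, ?_, ?_⟩
  · have hline : Tendsto (fun y => cdf' ν x + d * (y - x)) (𝓝[<] m) (𝓝 q) :=
      ((show Continuous fun y => cdf' ν x + d * (y - x) by fun_prop).tendsto m).mono_left
        nhdsWithin_le_nhds
    refine le_of_tendsto hline (eventually_nhdsWithin_of_forall fun y (hy : y < m) => ?_)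
    exact (htangent y hy).trans (cdf'_le_half_of_symmAbout hsym hy)
  · have hvar := integral_sq_sub_ge_of_symmAbout hsym hint (hFx.le.trans hq) hd
      fun u hu => by linarith [htangent (m - u) (by linarith)]
    calc 2 * q ^ 3 * (m - x) ^ 2 = 2 * q ^ 3 / (3 * d ^ 2) * (3 * (d * (m - x)) ^ 2) := by
          field_simp
      _ ≤ (∫ y, (y - m) ^ 2 ∂ν) * (3 * (d * (m - x)) ^ 2) := by gcongr
      _ = 3 * (∫ y, (y - m) ^ 2 ∂ν) * (q - cdf' ν x) ^ 2 := by ring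

end SymmetricUnimodal

section Bounds

variable {s α p q t : ℝ}

lemma sq_sub_le_of_one_sixth_le (hα : 1 / 6 ≤ α) (hαq : α ≤ q) (hq : q ≤ 1 / 2) :
    (q - α) ^ 2 ≤ 2 * (1 - 2 * α) ^ 2 * q ^ 3 := by
  rcases eq_or_lt_of_le hαq with rfl | hαq
  · rw [sub_self, zero_pow two_ne_zero]
    positivity
  have hq6 : 1 / 6 < q := hα.trans_lt hαq
  have c1 : 0 ≤ 8 / 9 * q ^ 3 - (q - 1 / 6) ^ 2 := by
    nlinarith [mul_nonneg (sq_nonneg (q - 1 / 2)) (by linarith : (0 : ℝ) ≤ q - 1 / 8)]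
  have c2 : 0 ≤ 2 * q ^ 3 * (1 - 2 * q) ^ 2 := by positivity
  have c3 : 0 ≤ (α - 1 / 6) * (q - α) * (1 - 8 * q ^ 3) :=
    mul_nonneg (mul_nonneg (by linarith) (by linarith)) (by nlinarith)
  nlinarith [mul_nonneg (by linarith : (0 : ℝ) ≤ q - α) c1,
    mul_nonneg (by linarith : (0 : ℝ) ≤ α - 1 / 6) c2,
    mul_nonneg c3 (by linarith : (0 : ℝ) ≤ q - 1 / 6)]

lemma le_sqrt_three_mul_of_cube_mul_sq_le (hs : 0 ≤ s) (hα : 1 / 6 < α) (hαp : α ≤ p)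
    (hpq : p ≤ q) (hq : q ≤ 1 / 2) (ht : 0 ≤ t)
    (h : 2 * q ^ 3 * t ^ 2 ≤ 3 * s ^ 2 * (q - p) ^ 2) :
    t ≤ s * √3 * (1 - 2 * α) := by
  have hq3 : 0 < q ^ 3 := pow_pos (by linarith) 3
  have hpoly := sq_sub_le_of_one_sixth_le hα.le (hαp.trans hpq) hq
  have hsq : (q - p) ^ 2 ≤ (q - α) ^ 2 := by nlinarith
  have ht2 : t ^ 2 ≤ (s * √3 * (1 - 2 * α)) ^ 2 := by
    rw [mul_pow, mul_pow, Real.sq_sqrt zero_le_three]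
    refine le_of_mul_le_mul_left ?_ (by positivity : 0 < 2 * q ^ 3)
    nlinarith
  have hb : 0 ≤ s * √3 * (1 - 2 * α) :=
    mul_nonneg (mul_nonneg hs (Real.sqrt_nonneg 3)) (by linarith)
  exact (pow_le_pow_iff_left₀ ht hb two_ne_zero).1 ht2

lemma le_sqrt_of_cube_mul_sq_le (hs : 0 ≤ s) (hα : 0 < α) (hαp : α ≤ p) (hpq : p ≤ q)
    (ht : 0 ≤ t) (h : 2 * q ^ 3 * t ^ 2 ≤ 3 * s ^ 2 * (q - p) ^ 2) :
    t ≤ s * √(2 / (9 * α)) := by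
  have hp : 0 < p := hα.trans_le hαp
  have hq3 : 0 < q ^ 3 := pow_pos (by linarith) 3
  have hpoly : 27 * p * (q - p) ^ 2 ≤ 4 * q ^ 3 := by
    nlinarith [mul_nonneg (sq_nonneg (q - 3 * p)) (by linarith : (0 : ℝ) ≤ 4 * q - 3 * p)]
  have ht2 : t ^ 2 ≤ (s * √(2 / (9 * α))) ^ 2 := by
    rw [mul_pow, Real.sq_sqrt (by positivity), mul_div_assoc', le_div_iff₀ (by positivity)]
    refine le_of_mul_le_mul_left ?_ (by positivity : 0 < 2 * q ^ 3)
    nlinarith [mul_le_mul_of_nonneg_left h (by positivity : (0 : ℝ) ≤ 9 * p),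
      mul_le_mul_of_nonneg_left hpoly (sq_nonneg s),
      mul_nonneg (mul_nonneg (sq_nonneg t) hq3.le) (sub_nonneg.2 hαp)]
  exact (pow_le_pow_iff_left₀ ht (by positivity) two_ne_zero).1 ht2

end Bounds

section Lower

variable {ν : Measure ℝ} {m s α x : ℝ}

lemma le_of_le_cdf'_of_half_lt [IsProbabilityMeasure ν] (hsym : SymmAbout ν m) (hα : 1 / 2 < α)
    (hx : α ≤ cdf' ν x) : m ≤ x :=
  not_lt.1 fun h => by linarith [cdf'_le_half_of_symmAbout hsym h]

lemma sub_le_of_le_cdf' (hν : ν ∈ VsetUS m s) (hs : 0 < s) (hα : 0 < α) {b : ℝ} (hb : 0 ≤ b)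
    (hbound : ∀ p q t, α ≤ p → p ≤ q → q ≤ 1 / 2 → 0 ≤ t →
      2 * q ^ 3 * t ^ 2 ≤ 3 * s ^ 2 * (q - p) ^ 2 → t ≤ b)
    (hx : α ≤ cdf' ν x) : m - b ≤ x := by
  obtain ⟨⟨hprob, -, hvar⟩, hU, hsym⟩ := hν
  rcases le_or_gt m x with hmx | hxm
  · linarith
  have hint : Integrable (fun y => (y - m) ^ 2) ν :=
    .of_integral_ne_zero (by rw [hvar]; positivity)
  obtain ⟨q, hpq, hq, h⟩ := exists_cube_mul_sq_le hU hsym hint hxm (hα.trans_le hx)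
  rw [hvar] at h
  linarith [hbound _ q (m - x) hx hpq hq (by linarith) h]

end Lower

section BestCase

variable {m s α : ℝ}

lemma best_case_VaR_of_half_lt (hs : 0 < s) (hα₂ : 1 / 2 < α) (hα₁ : α < 1) :
    sInf ((fun ν => VaR ν α) '' VsetUS m s) = m ∧
      sInf ((fun ν => VaRp ν α) '' VsetUS m s) = m := by
  have hw₀ : 0 < 2 * (1 - α) := by linarith
  have hc : 0 < s * √(3 / (2 * (1 - α))) := by positivity
  have hmem : diracUnifMix m (s * √(3 / (2 * (1 - α)))) (2 * (1 - α)) ∈ VsetUS m s := by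
    refine diracUnifMix_mem_VsetUS hc hw₀.le (by linarith) ?_
    rw [mul_pow, Real.sq_sqrt (by positivity)]
    field_simp [sub_ne_zero.2 (ne_of_gt hα₁)]
  obtain ⟨hV, hVp, -⟩ := sInf_VaR_eq_and_sInf_VaRp_eq (fun ν hν => hν.1.1) (by linarith) hα₁
    (fun ν hν x hx => by have := hν.1.1; exact le_of_le_cdf'_of_half_lt hν.2.2 hα₂ hx) hmem
    (by rw [cdf'_diracUnifMix_self hc hw₀.le (by linarith)]; linarith)
    (fun x hx => by linarith [lt_cdf'_diracUnifMix_of_lt hc hw₀ (by linarith) hx])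
  exact ⟨hV, hVp⟩

lemma best_case_VaR_of_one_sixth_lt (hs : 0 < s) (hα₆ : 1 / 6 < α) (hα₂ : α ≤ 1 / 2) :
    sInf ((fun ν => VaR ν α) '' VsetUS m s) = m - s * √3 * (1 - 2 * α) ∧
      sInf ((fun ν => VaRp ν α) '' VsetUS m s) = m - s * √3 * (1 - 2 * α) ∧
      unif (m - s * √3) (m + s * √3) ∈ VsetUS m s ∧
      VaR (unif (m - s * √3) (m + s * √3)) α = m - s * √3 * (1 - 2 * α) := by
  have hc : 0 < s * √3 := by positivity
  have hmem : unif (m - s * √3) (m + s * √3) ∈ VsetUS m s := by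
    rw [← diracUnifMix_one]
    refine diracUnifMix_mem_VsetUS hc zero_le_one le_rfl ?_
    rw [mul_pow, Real.sq_sqrt zero_le_three]
    ring
  obtain ⟨h₀, h₀'⟩ := le_cdf'_diracUnifMix_and_forall_lt (m := m) (α := α) hc one_pos le_rfl
    (by linarith) (x₀ := m - s * √3 * (1 - 2 * α)) (by ring)
  rw [diracUnifMix_one] at h₀ h₀'
  obtain ⟨hV, hVp, hV₀⟩ := sInf_VaR_eq_and_sInf_VaRp_eq (fun ν hν => hν.1.1) (by linarith)
    (by linarith) (fun ν hν x hx => sub_le_of_le_cdf' hν hs (by linarith)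
      (mul_nonneg hc.le (by linarith))
      (fun _ _ _ hp hpq hq ht h => le_sqrt_three_mul_of_cube_mul_sq_le hs.le hα₆ hp hpq hq ht h)
      hx)
    hmem h₀ h₀'
  exact ⟨hV, hVp, hmem, hV₀⟩

lemma sqrt_two_div_nine_mul (hα : 0 < α) : √(2 / (9 * α)) = 2 / 3 * √(1 / (2 * α)) := by
  rw [show 2 / (9 * α) = (2 / 3) ^ 2 * (1 / (2 * α)) by field_simp; ring,
    Real.sqrt_mul (by positivity), Real.sqrt_sq (by positivity)]

lemma best_case_VaR_of_le_one_sixth (hs : 0 < s) (hα₀ : 0 < α) (hα₆ : α ≤ 1 / 6) :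
    sInf ((fun ν => VaR ν α) '' VsetUS m s) = m - s * √(2 / (9 * α)) ∧
      sInf ((fun ν => VaRp ν α) '' VsetUS m s) = m - s * √(2 / (9 * α)) ∧
      diracUnifMix m (s * √(1 / (2 * α))) (6 * α) ∈ VsetUS m s ∧
      VaR (diracUnifMix m (s * √(1 / (2 * α))) (6 * α)) α = m - s * √(2 / (9 * α)) := by
  have hc : 0 < s * √(1 / (2 * α)) := by positivity
  have hmem : diracUnifMix m (s * √(1 / (2 * α))) (6 * α) ∈ VsetUS m s := by
    refine diracUnifMix_mem_VsetUS hc (by positivity) (by linarith) ?_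
    rw [mul_pow, Real.sq_sqrt (by positivity)]
    field_simp
    ring
  obtain ⟨h₀, h₀'⟩ := le_cdf'_diracUnifMix_and_forall_lt (m := m) (w := 6 * α) (α := α) hc
    (by positivity) (by linarith) (by linarith) (x₀ := m - s * √(2 / (9 * α)))
    (by rw [sqrt_two_div_nine_mul hα₀]; ring)
  obtain ⟨hV, hVp, hV₀⟩ := sInf_VaR_eq_and_sInf_VaRp_eq (fun ν hν => hν.1.1) hα₀
    (by linarith) (fun ν hν x hx => sub_le_of_le_cdf' hν hs hα₀ (by positivity)
      (fun _ _ _ hp hpq _ ht h => le_sqrt_of_cube_mul_sq_le hs.le hα₀ hp hpq ht h) hx)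
    hmem h₀ h₀'
  exact ⟨hV, hVp, hmem, hV₀⟩

end BestCase

/-- Best-case VaR for symmetric unimodal distributions (Proposition 3.4(ii)). -/
theorem best_case_VaR_unimodal_symmetric (m s α : ℝ) (hs : 0 < s) (hα : α ∈ Ioo (0:ℝ) 1) :
    sInf ((fun ν => VaR ν α) '' VsetUS m s)
        = (if (1:ℝ)/2 < α then m
           else if (1:ℝ)/6 < α then m - s * Real.sqrt 3 * (1 - 2 * α)
           else m - s * Real.sqrt (2 / (9 * α))) ∧
    sInf ((fun ν => VaRp ν α) '' VsetUS m s)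
        = (if (1:ℝ)/2 < α then m
           else if (1:ℝ)/6 < α then m - s * Real.sqrt 3 * (1 - 2 * α)
           else m - s * Real.sqrt (2 / (9 * α))) ∧
    ((1:ℝ)/6 < α → α ≤ (1:ℝ)/2 →
      unif (m - s * Real.sqrt 3) (m + s * Real.sqrt 3) ∈ VsetUS m s ∧
      VaR (unif (m - s * Real.sqrt 3) (m + s * Real.sqrt 3)) α
        = m - s * Real.sqrt 3 * (1 - 2 * α)) ∧
    (α ≤ (1:ℝ)/6 →
      (ENNReal.ofReal (1 - 6 * α) • Measure.dirac m +
        ENNReal.ofReal (6 * α) • unif (m - s * Real.sqrt (1 / (2 * α)))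
          (m + s * Real.sqrt (1 / (2 * α)))) ∈ VsetUS m s ∧
      VaR (ENNReal.ofReal (1 - 6 * α) • Measure.dirac m +
        ENNReal.ofReal (6 * α) • unif (m - s * Real.sqrt (1 / (2 * α)))
          (m + s * Real.sqrt (1 / (2 * α)))) α
        = m - s * Real.sqrt (2 / (9 * α))) := by
  obtain ⟨hα₀, hα₁⟩ := hα
  rcases lt_or_ge (1 / 2) α with hα₂ | hα₂
  · obtain ⟨hV, hVp⟩ := best_case_VaR_of_half_lt (m := m) hs hα₂ hα₁
    simp only [if_pos hα₂]
    exact ⟨hV, hVp, fun _ h => absurd h (not_le.2 hα₂), fun h => absurd h (by linarith)⟩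
  rcases lt_or_ge (1 / 6) α with hα₆ | hα₆
  · obtain ⟨hV, hVp, hmem, hV₀⟩ := best_case_VaR_of_one_sixth_lt (m := m) hs hα₆ hα₂
    simp only [if_neg (not_lt.2 hα₂), if_pos hα₆]
    exact ⟨hV, hVp, fun _ _ => ⟨hmem, hV₀⟩, fun h => absurd h (not_le.2 hα₆)⟩
  · obtain ⟨hV, hVp, hmem, hV₀⟩ := best_case_VaR_of_le_one_sixth (m := m) hs hα₀ hα₆
    simp only [if_neg (not_lt.2 hα₂), if_neg (not_lt.2 hα₆)]
    exact ⟨hV, hVp, fun h => absurd h (not_lt.2 hα₆), fun _ => ⟨hmem, hV₀⟩⟩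
end

section
/- (Modified Schwarz inequality, monotone case.) Let H : [a,b] → ℝ be nondecreasing and continuous at a and at b, let H̄ be the greatest convex minorant of H on [a,b] (with H̄(a) = H(a), H̄(b) = H(b)), and let h̄ denote the right-hand derivative of H̄. Then for every nondecreasing function x : [a,b] → ℝ for which both integrals exist and are finite, ∫_a^b x(t) dH(t) ≤ ∫_a^b x(t) h̄(t) dt, where the left side is the Lebesgue–Stieltjes integral with respect to H. -/
/-!
Both sides integrate `x` against a measure on `(a, b]`: the Stieltjes measure `dH` and
`h̄ dt = dH̄`. They have the same mass `H b - H a`, since `H̄` agrees with `H` at the endpoints.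
An upper set of `(a, b]` is `(c, b]` or `[c, b]`; its `dH̄`-mass is at least `H b - H̄ c`, while
its `dH`-mass is at most `H b - H(c⁻) ≤ H b - H̄ c` because `H̄ ≤ H` and `H̄` is continuous.
So `dH̄` stochastically dominates `dH`, and by the layer-cake formula it gives monotone
functions the larger integral.
-/

open MeasureTheory Set

/-- The right-hand derivative of a real function. -/
noncomputable def rD (f : ℝ → ℝ) (x : ℝ) : ℝ := derivWithin f (Ioi x) x

/-- The greatest convex minorant of `H` on `[a, b]`: the pointwise supremum of all
functions convex on `[a, b]` lying below `H` on `[a, b]`. -/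
noncomputable def gcm (a b : ℝ) (H : ℝ → ℝ) (t : ℝ) : ℝ :=
  sSup {y : ℝ | ∃ g : ℝ → ℝ,
    ConvexOn ℝ (Icc a b) g ∧ (∀ s ∈ Icc a b, g s ≤ H s) ∧ y = g t}

open Filter Topology

section UpperSetDomination

variable {α : Type*} [MeasurableSpace α] [Preorder α] {μ ν : Measure α} {f : α → ℝ}

theorem lintegral_ofReal_le_of_isUpperSet_measure_le (hle : ∀ s, IsUpperSet s → μ s ≤ ν s)
    (hf : Monotone f) (hmeas : Measurable f) (hf0 : 0 ≤ f) :
    ∫⁻ x, ENNReal.ofReal (f x) ∂μ ≤ ∫⁻ x, ENNReal.ofReal (f x) ∂ν := by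
  rw [lintegral_eq_lintegral_meas_lt μ (ae_of_all _ hf0) hmeas.aemeasurable,
    lintegral_eq_lintegral_meas_lt ν (ae_of_all _ hf0) hmeas.aemeasurable]
  exact lintegral_mono fun t =>
    hle _ (isUpperSet_setOfPred.2 fun _ _ hxy hx => hx.trans_le (hf hxy))

theorem integral_le_of_isUpperSet_measure_le [IsFiniteMeasure μ] (huniv : ν univ = μ univ)
    (hle : ∀ s, IsUpperSet s → μ s ≤ ν s) (hf : Monotone f) (hmeas : Measurable f) {m M : ℝ}
    (hbdd : ∀ x, f x ∈ Icc m M) :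
    ∫ x, f x ∂μ ≤ ∫ x, f x ∂ν := by
  have : IsFiniteMeasure ν := ⟨huniv ▸ measure_lt_top μ univ⟩
  have hint : ∀ (ρ : Measure α) [IsFiniteMeasure ρ], Integrable f ρ := fun ρ _ =>
    .of_bound hmeas.aestronglyMeasurable (max |m| |M|)
      (ae_of_all _ fun x => abs_le_max_abs_abs (hbdd x).1 (hbdd x).2)
  have hshift : ∀ (ρ : Measure α) [IsFiniteMeasure ρ],
      ∫ x, f x ∂ρ = ∫ x, (f x - m) ∂ρ + (ρ univ).toReal * m := fun ρ _ => by
    rw [integral_sub (hint ρ) (integrable_const m)]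
    simp [measureReal_def]
  have hnonneg : 0 ≤ fun x => f x - m := fun x => sub_nonneg.2 (hbdd x).1
  have hint_sub : ∀ (ρ : Measure α) [IsFiniteMeasure ρ], Integrable (fun x => f x - m) ρ :=
    fun ρ _ => (hint ρ).sub (integrable_const m)
  rw [hshift μ, hshift ν, huniv, add_le_add_iff_right,
    integral_eq_lintegral_of_nonneg_ae (ae_of_all _ hnonneg) (hint_sub μ).1,
    integral_eq_lintegral_of_nonneg_ae (ae_of_all _ hnonneg) (hint_sub ν).1]
  exact ENNReal.toReal_mono (hint_sub ν).lintegral_lt_top.ne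
    (lintegral_ofReal_le_of_isUpperSet_measure_le hle (fun _ _ hxy => sub_le_sub_right (hf hxy) m)
      (hmeas.sub measurable_const) hnonneg)

end UpperSetDomination

theorem MonotoneOn.exists_monotone_eqOn_Icc {α β : Type*} [LinearOrder α] [Preorder β]
    {f : α → β} {a b : α} (hab : a ≤ b) (hf : MonotoneOn f (Icc a b)) :
    ∃ g : α → β, Monotone g ∧ EqOn g f (Icc a b) ∧ ∀ t, g t ∈ Icc (f a) (f b) := by
  refine ⟨IccExtend hab ((Icc a b).domRestrict f), (monotoneOn_iff_monotone.1 hf).IccExtend hab,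
    fun t ht => IccExtend_of_mem _ _ ht, fun t => ?_⟩
  have hs := (projIcc a b hab t).2
  exact ⟨hf (left_mem_Icc.2 hab) hs hs.1, hf hs (right_mem_Icc.2 hab) hs.2⟩

section IntervalFunctions

variable {a b t : ℝ} {f : ℝ → ℝ}

theorem MonotoneOn.bddBelow_image_Icc (hf : MonotoneOn f (Icc a b)) :
    BddBelow (f '' Icc a b) :=
  ⟨f a, by rintro _ ⟨s, hs, rfl⟩; exact hf ⟨le_rfl, hs.1.trans hs.2⟩ hs hs.1⟩

theorem MonotoneOn.rD_nonneg (hf : MonotoneOn f (Icc a b))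
    (ht : t ∈ Ioo a b) : 0 ≤ rD f t := by
  rw [rD, ← derivWithin_inter (Iio_mem_nhds ht.2), Ioi_inter_Iio]
  exact (hf.mono fun s hs => ⟨ht.1.le.trans hs.1.le, hs.2.le⟩).derivWithin_nonneg

theorem ConvexOn.monotoneOn_Icc_of_left_le (hf : ConvexOn ℝ (Icc a b) f)
    (hmin : ∀ t ∈ Icc a b, f a ≤ f t) : MonotoneOn f (Icc a b) := by
  intro s hs t ht hst
  rcases hs.1.eq_or_lt with rfl | has
  · exact hmin t ht
  rcases hst.eq_or_lt with rfl | hst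
  · exact le_rfl
  have hchord := hf.secant_mono_aux1 ⟨le_rfl, has.le.trans hs.2⟩ ht has hst
  nlinarith [hmin s hs]

theorem ConvexOn.continuousWithinAt_Icc_left_of_left_le (hab : a < b)
    (hf : ConvexOn ℝ (Icc a b) f) (hmin : ∀ t ∈ Icc a b, f a ≤ f t) :
    ContinuousWithinAt f (Icc a b) a := by
  have hchord : ∀ t ∈ Icc a b, f t ≤ f a + (t - a) / (b - a) * (f b - f a) := by
    intro t ht
    rcases ht.1.eq_or_lt with rfl | hat
    · simp
    rcases ht.2.eq_or_lt with rfl | htb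
    · rw [div_self (sub_ne_zero.2 hab.ne')]
      linarith
    have := hf.secant_mono_aux1 ⟨le_rfl, hab.le⟩ ⟨hab.le, le_rfl⟩ hat htb
    rw [← sub_le_iff_le_add', div_mul_eq_mul_div, le_div_iff₀ (sub_pos.2 hab)]
    linarith
  refine tendsto_of_tendsto_of_tendsto_of_le_of_le' tendsto_const_nhds ?_
    (eventually_nhdsWithin_of_forall hmin) (eventually_nhdsWithin_of_forall hchord)
  have : ContinuousAt (fun t => f a + (t - a) / (b - a) * (f b - f a)) a := by fun_prop
  simpa using this.continuousWithinAt.tendsto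

end IntervalFunctions

section GreatestConvexMinorant

variable {a b t : ℝ} {H : ℝ → ℝ}

theorem le_gcm {g : ℝ → ℝ} (hg : ConvexOn ℝ (Icc a b) g) (hgH : ∀ s ∈ Icc a b, g s ≤ H s)
    (ht : t ∈ Icc a b) : g t ≤ gcm a b H t :=
  le_csSup ⟨H t, by rintro y ⟨g, -, hgH, rfl⟩; exact hgH t ht⟩ ⟨g, hg, hgH, rfl⟩

theorem gcm_le_of_forall (hH : BddBelow (H '' Icc a b)) {c : ℝ}
    (h : ∀ g, ConvexOn ℝ (Icc a b) g → (∀ s ∈ Icc a b, g s ≤ H s) → g t ≤ c) :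
    gcm a b H t ≤ c := by
  obtain ⟨m, hm⟩ := hH
  refine csSup_le ⟨m, fun _ => m, convexOn_const m (convex_Icc a b),
    fun s hs => hm (mem_image_of_mem H hs), rfl⟩ ?_
  rintro y ⟨g, hg, hgH, rfl⟩
  exact h g hg hgH

theorem gcm_le (hH : BddBelow (H '' Icc a b)) (ht : t ∈ Icc a b) : gcm a b H t ≤ H t :=
  gcm_le_of_forall hH fun _ _ hgH => hgH t ht

theorem convexOn_gcm (hH : BddBelow (H '' Icc a b)) : ConvexOn ℝ (Icc a b) (gcm a b H) := by
  refine ⟨convex_Icc a b, fun u hu v hv c d hc hd hcd => gcm_le_of_forall hH fun g hg hgH => ?_⟩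
  calc g (c • u + d • v) ≤ c • g u + d • g v := hg.2 hu hv hc hd hcd
    _ ≤ c • gcm a b H u + d • gcm a b H v := by
      gcongr
      exacts [le_gcm hg hgH hu, le_gcm hg hgH hv]

theorem left_le_gcm (hH : MonotoneOn H (Icc a b)) (ht : t ∈ Icc a b) : H a ≤ gcm a b H t :=
  le_gcm (convexOn_const (H a) (convex_Icc a b))
    (fun _ hs => hH ⟨le_rfl, hs.1.trans hs.2⟩ hs hs.1) ht

theorem gcm_left (hab : a ≤ b) (hH : MonotoneOn H (Icc a b)) : gcm a b H a = H a :=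
  (gcm_le hH.bddBelow_image_Icc ⟨le_rfl, hab⟩).antisymm (left_le_gcm hH ⟨le_rfl, hab⟩)

theorem monotoneOn_gcm (hH : MonotoneOn H (Icc a b)) :
    MonotoneOn (gcm a b H) (Icc a b) :=
  (convexOn_gcm hH.bddBelow_image_Icc).monotoneOn_Icc_of_left_le fun _ ht =>
    gcm_left (ht.1.trans ht.2) hH ▸ left_le_gcm hH ht

theorem exists_affine_le_gcm (hH : MonotoneOn H (Icc a b))
    (hcb : ContinuousWithinAt H (Icc a b) b) {δ : ℝ} (hδ : 0 < δ) :
    ∃ M, ∀ t ∈ Icc a b, H b - δ - M * (b - t) ≤ gcm a b H t := by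
  obtain ⟨η, hη, hball⟩ := Metric.mem_nhdsWithin_iff.1
    (hcb.eventually (lt_mem_nhds (sub_lt_self (H b) hδ)))
  refine ⟨(H b - H a) / η, fun t ht => ?_⟩
  have hab : a ≤ b := ht.1.trans ht.2
  set M := (H b - H a) / η
  have hM : 0 ≤ M := div_nonneg (sub_nonneg.2 (hH ⟨le_rfl, hab⟩ ⟨hab, le_rfl⟩ hab)) hη.le
  have hline : ConvexOn ℝ (Icc a b) fun t => M • id t + (H b - δ - M * b) :=
    ((convexOn_id (convex_Icc a b)).smul hM).add_const _
  have hbelow : ∀ s ∈ Icc a b, M • id s + (H b - δ - M * b) ≤ H s := by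
    intro s hs
    simp only [id, smul_eq_mul]
    -- near `b` the line stays below `H b - δ < H`; farther left it has dropped below `H a`
    rcases lt_or_ge (b - s) η with hsη | hsη
    · have hs_near : s ∈ Metric.ball b η ∩ Icc a b := by
        refine ⟨?_, hs⟩
        rw [Metric.mem_ball, Real.dist_eq, abs_sub_comm, abs_of_nonneg (sub_nonneg.2 hs.2)]
        exact hsη
      have hHs : H b - δ < H s := hball hs_near
      linarith [mul_nonneg hM (sub_nonneg.2 hs.2)]
    · have hMη : M * η = H b - H a := div_mul_cancel₀ _ hη.ne'
      nlinarith [mul_le_mul_of_nonneg_left hsη hM, hH ⟨le_rfl, hab⟩ hs hs.1]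
  have := le_gcm hline hbelow ht
  simp only [id, smul_eq_mul] at this
  linarith

theorem gcm_right (hab : a ≤ b) (hH : MonotoneOn H (Icc a b))
    (hcb : ContinuousWithinAt H (Icc a b) b) : gcm a b H b = H b := by
  refine (gcm_le hH.bddBelow_image_Icc ⟨hab, le_rfl⟩).antisymm ?_
  refine le_of_forall_pos_le_add fun δ hδ => ?_
  obtain ⟨M, hM⟩ := exists_affine_le_gcm hH hcb hδ
  linarith [hM b ⟨hab, le_rfl⟩]

theorem continuousWithinAt_gcm_right (hab : a ≤ b) (hH : MonotoneOn H (Icc a b))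
    (hcb : ContinuousWithinAt H (Icc a b) b) : ContinuousWithinAt (gcm a b H) (Icc a b) b := by
  rw [ContinuousWithinAt, gcm_right hab hH hcb]
  refine tendsto_order.2 ⟨fun l hl => ?_, fun u hu => eventually_nhdsWithin_of_forall fun t ht =>
    ((gcm_le hH.bddBelow_image_Icc ht).trans (hH ht ⟨hab, le_rfl⟩ ht.2)).trans_lt hu⟩
  obtain ⟨M, hM⟩ := exists_affine_le_gcm hH hcb (half_pos (sub_pos.2 hl))
  have hlim : Tendsto (fun t => H b - (H b - l) / 2 - M * (b - t)) (𝓝[Icc a b] b)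
      (𝓝 (H b - (H b - l) / 2)) := by
    have : Continuous fun t => H b - (H b - l) / 2 - M * (b - t) := by fun_prop
    simpa using (this.tendsto b).mono_left nhdsWithin_le_nhds
  filter_upwards [hlim.eventually (lt_mem_nhds (show l < H b - (H b - l) / 2 by linarith)),
    self_mem_nhdsWithin] with t hlt ht
  exact hlt.trans_le (hM t ht)

theorem continuousOn_gcm (hab : a < b) (hH : MonotoneOn H (Icc a b))
    (hcb : ContinuousWithinAt H (Icc a b) b) : ContinuousOn (gcm a b H) (Icc a b) := by
  have hconv := convexOn_gcm hH.bddBelow_image_Icc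
  refine hconv.continuousOn_Icc hab ((continuousWithinAt_Icc_iff_Ici hab).1 ?_)
    ((continuousWithinAt_Icc_iff_Iic hab).1 (continuousWithinAt_gcm_right hab.le hH hcb))
  exact hconv.continuousWithinAt_Icc_left_of_left_le hab fun t ht =>
    monotoneOn_gcm hH ⟨le_rfl, hab.le⟩ ht ht.1

theorem hasDerivWithinAt_rD_gcm (hH : BddBelow (H '' Icc a b)) (ht : t ∈ Ioo a b) :
    HasDerivWithinAt (gcm a b H) (rD (gcm a b H) t) (Ioi t) t :=
  (convexOn_gcm hH).hasDerivWithinAt_rightDeriv_of_mem_interior (by rwa [interior_Icc])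

theorem withDensity_rD_gcm_Ioc (hH : MonotoneOn H (Icc a b))
    (hcb : ContinuousWithinAt H (Icc a b) b) {u v : ℝ} (hau : a ≤ u) (huv : u ≤ v)
    (hvb : v ≤ b) :
    volume.withDensity (fun t => ENNReal.ofReal (rD (gcm a b H) t)) (Ioc u v)
      = ENNReal.ofReal (gcm a b H v - gcm a b H u) := by
  rcases huv.eq_or_lt with rfl | huv_lt
  · simp
  have hcont : ContinuousOn (gcm a b H) (Icc u v) :=
    (continuousOn_gcm (hau.trans_lt (huv_lt.trans_le hvb)) hH hcb).mono (Icc_subset_Icc hau hvb)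
  have hsub : Ioo u v ⊆ Ioo a b := Ioo_subset_Ioo hau hvb
  have hderiv : ∀ t ∈ Ioo u v, HasDerivWithinAt (gcm a b H) (rD (gcm a b H) t) (Ioi t) t :=
    fun t ht => hasDerivWithinAt_rD_gcm hH.bddBelow_image_Icc (hsub ht)
  have hnonneg : ∀ t ∈ Ioo u v, 0 ≤ rD (gcm a b H) t :=
    fun t ht => (monotoneOn_gcm hH).rD_nonneg (hsub ht)
  have hint := intervalIntegral.integrableOn_deriv_right_of_nonneg hcont hderiv hnonneg
  have hnonneg_ae : 0 ≤ᵐ[volume.restrict (Ioc u v)] rD (gcm a b H) := by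
    rw [EventuallyLE, ← Measure.restrict_congr_set Ioo_ae_eq_Ioc]
    exact (ae_restrict_mem measurableSet_Ioo).mono hnonneg
  rw [withDensity_apply _ measurableSet_Ioc, ← ofReal_integral_eq_lintegral_ofReal hint hnonneg_ae,
    ← intervalIntegral.integral_of_le huv, intervalIntegral.integral_eq_sub_of_hasDeriv_right_of_le
      huv hcont hderiv ((intervalIntegrable_iff_integrableOn_Ioc_of_le huv).2 hint)]

theorem setIntegral_withDensity_rD_gcm (hH : MonotoneOn H (Icc a b)) (f : ℝ → ℝ) :
    ∫ t in Ioc a b, f t ∂volume.withDensity (fun t => ENNReal.ofReal (rD (gcm a b H) t))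
      = ∫ t in Ioc a b, f t * rD (gcm a b H) t := by
  have hmeas : Measurable fun t => ENNReal.ofReal (rD (gcm a b H) t) :=
    (measurable_derivWithin_Ioi (gcm a b H)).ennreal_ofReal
  rw [setIntegral_withDensity_eq_setIntegral_toReal_smul hmeas
    (ae_of_all _ fun _ => ENNReal.ofReal_lt_top) f measurableSet_Ioc,
    integral_Ioc_eq_integral_Ioo, integral_Ioc_eq_integral_Ioo]
  refine setIntegral_congr_fun measurableSet_Ioo fun t ht => ?_
  rw [ENNReal.toReal_ofReal ((monotoneOn_gcm hH).rD_nonneg ht), smul_eq_mul, mul_comm]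

end GreatestConvexMinorant

section StieltjesComparison

variable {a b : ℝ} {H : ℝ → ℝ}

theorem stieltjesFunction_measure_Ioc_le (hH : Monotone H) (hcb : ContinuousAt H b) {w : ℝ}
    (hw : w ∈ Icc a b) :
    hH.stieltjesFunction.measure (Ioc w b) ≤ ENNReal.ofReal (H b - gcm a b H w) := by
  rw [StieltjesFunction.measure_Ioc, hH.stieltjesFunction_eq b,
    hcb.continuousWithinAt.rightLim_eq]
  refine ENNReal.ofReal_le_ofReal (sub_le_sub_left ?_ _)
  exact (gcm_le (hH.monotoneOn _).bddBelow_image_Icc hw).trans (hH.le_rightLim le_rfl)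

theorem stieltjesFunction_measure_inter_Ioc_le (hab : a < b) (hH : Monotone H)
    (hcb : ContinuousAt H b) {U : Set ℝ} (hU : IsUpperSet U) :
    hH.stieltjesFunction.measure (U ∩ Ioc a b)
      ≤ volume.withDensity (fun t => ENNReal.ofReal (rD (gcm a b H) t)) (U ∩ Ioc a b) := by
  set p := U ∩ Ioc a b
  rcases p.eq_empty_or_nonempty with hp | hp
  · simp [hp]
  have hHab : MonotoneOn H (Icc a b) := hH.monotoneOn _
  have hcb' : ContinuousWithinAt H (Icc a b) b := hcb.continuousWithinAt
  have hbdd : BddBelow p := ⟨a, fun s hs => hs.2.1.le⟩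
  set c := sInf p
  have hc : c ∈ Icc a b := by
    obtain ⟨s, hs⟩ := hp
    exact ⟨le_csInf ⟨s, hs⟩ fun s hs => hs.2.1.le, (csInf_le hbdd hs).trans hs.2.2⟩
  have hIoc : Ioc c b ⊆ p := fun s hs =>
    let ⟨w, hw, hws⟩ := exists_lt_of_csInf_lt hp hs.1
    ⟨hU hws.le hw.1, hw.2.1.trans hws, hs.2⟩
  have hμ : hH.stieltjesFunction.measure p ≤ ENNReal.ofReal (H b - gcm a b H c) := by
    rcases hc.1.eq_or_lt with hac | hac
    · rw [← hac]
      exact (measure_mono inter_subset_right).trans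
        (stieltjesFunction_measure_Ioc_le hH hcb ⟨le_rfl, hab.le⟩)
    have : NeBot (𝓝[Ioo a c] c) := right_nhdsWithin_Ioo_neBot hac
    have hG : Tendsto (gcm a b H) (𝓝[Ioo a c] c) (𝓝 (gcm a b H c)) :=
      ((continuousOn_gcm hab hHab hcb') c hc).tendsto.mono_left
        (nhdsWithin_mono _ fun w hw => ⟨hw.1.le, (hw.2.trans_le hc.2).le⟩)
    -- `p ⊆ (w, b]` for every `w < c`; let `w → c⁻`
    refine ge_of_tendsto ((ENNReal.continuous_ofReal.tendsto _).comp (tendsto_const_nhds.sub hG)) ?_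
    filter_upwards [self_mem_nhdsWithin] with w hw
    have hpw : p ⊆ Ioc w b := fun s hs => ⟨hw.2.trans_le (csInf_le hbdd hs), hs.2.2⟩
    exact (measure_mono hpw).trans
      (stieltjesFunction_measure_Ioc_le hH hcb ⟨hw.1.le, (hw.2.trans_le hc.2).le⟩)
  calc hH.stieltjesFunction.measure p ≤ ENNReal.ofReal (H b - gcm a b H c) := hμ
    _ = volume.withDensity (fun t => ENNReal.ofReal (rD (gcm a b H) t)) (Ioc c b) := by
      rw [withDensity_rD_gcm_Ioc hHab hcb' hc.1 hc.2 le_rfl, gcm_right hab.le hHab hcb']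
    _ ≤ _ := measure_mono hIoc

theorem withDensity_rD_gcm_Ioc_eq_stieltjesFunction_measure (hab : a ≤ b) (hH : Monotone H)
    (hca : ContinuousAt H a) (hcb : ContinuousAt H b) :
    volume.withDensity (fun t => ENNReal.ofReal (rD (gcm a b H) t)) (Ioc a b)
      = hH.stieltjesFunction.measure (Ioc a b) := by
  rw [withDensity_rD_gcm_Ioc (hH.monotoneOn _) hcb.continuousWithinAt le_rfl hab le_rfl,
    gcm_right hab (hH.monotoneOn _) hcb.continuousWithinAt, gcm_left hab (hH.monotoneOn _),
    StieltjesFunction.measure_Ioc, hH.stieltjesFunction_eq, hH.stieltjesFunction_eq,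
    hca.continuousWithinAt.rightLim_eq, hcb.continuousWithinAt.rightLim_eq]

end StieltjesComparison

theorem modified_schwarz_inequality_general (a b : ℝ) (H : ℝ → ℝ) (hH : Monotone H)
    (hca : ContinuousAt H a) (hcb : ContinuousAt H b)
    (x : ℝ → ℝ) (hx : MonotoneOn x (Icc a b)) :
    ∫ t in Ioc a b, x t ∂hH.stieltjesFunction.measure
      ≤ ∫ t in Ioc a b, x t * rD (gcm a b H) t := by
  rcases le_or_gt b a with hba | hab
  · simp [Ioc_eq_empty_of_le hba]
  obtain ⟨y, hy, hyx, hy_mem⟩ := hx.exists_monotone_eqOn_Icc hab.le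
  have hyx' : EqOn y x (Ioc a b) := hyx.mono Ioc_subset_Icc_self
  have : IsFiniteMeasure (hH.stieltjesFunction.measure.restrict (Ioc a b)) := ⟨by simp⟩
  calc ∫ t in Ioc a b, x t ∂hH.stieltjesFunction.measure
      = ∫ t in Ioc a b, y t ∂hH.stieltjesFunction.measure :=
        setIntegral_congr_fun measurableSet_Ioc fun t ht => (hyx' ht).symm
    _ ≤ ∫ t in Ioc a b, y t ∂volume.withDensity fun t => ENNReal.ofReal (rD (gcm a b H) t) := by
      refine integral_le_of_isUpperSet_measure_le ?_ (fun U hU => ?_) hy hy.measurable hy_mem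
      · simpa using withDensity_rD_gcm_Ioc_eq_stieltjesFunction_measure hab.le hH hca hcb
      · simpa [Measure.restrict_apply' measurableSet_Ioc] using
          stieltjesFunction_measure_inter_Ioc_le hab hH hcb hU
    _ = ∫ t in Ioc a b, y t * rD (gcm a b H) t := setIntegral_withDensity_rD_gcm (hH.monotoneOn _) y
    _ = ∫ t in Ioc a b, x t * rD (gcm a b H) t :=
        setIntegral_congr_fun measurableSet_Ioc fun t ht => by rw [hyx' ht]

/-- Modified Schwarz inequality of Moriguti (Lemma 4.2), monotone case: for a nondecreasing
`H` continuous at the endpoints `a`, `b`, and any nondecreasing `x` with finite integrals,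
`∫_a^b x dH ≤ ∫_a^b x(t) h̄(t) dt`, where `h̄` is the right derivative of the greatest
convex minorant of `H` on `[a, b]`, and the left side is the Lebesgue–Stieltjes integral. -/
theorem modified_schwarz_inequality (a b : ℝ) (hab : a ≤ b) (H : ℝ → ℝ) (hH : Monotone H)
    (hca : ContinuousAt H a) (hcb : ContinuousAt H b)
    (x : ℝ → ℝ) (hx : MonotoneOn x (Icc a b))
    (hint1 : IntegrableOn x (Ioc a b) hH.stieltjesFunction.measure)
    (hint2 : IntegrableOn (fun t => x t * rD (gcm a b H) t) (Ioc a b) volume) :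
    ∫ t in Ioc a b, x t ∂hH.stieltjesFunction.measure
      ≤ ∫ t in Ioc a b, x t * rD (gcm a b H) t :=
  modified_schwarz_inequality_general a b H hH hca hcb x hx
end
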